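/- Let â : ℤ² → ℂ be absolutely summable. Then Σ_{(n1,n2,n3,n4)∈(ℤ²)⁴ : n1−n2+n3−n4=0, |n1|²−|n2|²+|n3|²−|n4|²=0} â(n1)·conj(â(n2))·â(n3)·conj(â(n4)) = Σ_{n∈ℤ²} Σ_{k∈ℤ} | Σ_{n1,n3∈ℤ² : n1+n3=n, |n1|²+|n3|²=k} â(n1)·â(n3) |². In particular this quadrilinear sum is a nonnegative real number, and consequently the Hamiltonian H_0 = Σ_{n∈ℤ²} |n|²|â(n)|² + (1/2)·(this quadrilinear sum) of the resonant system satisfies H_0 ≥ Σ_{n∈ℤ²} |n|² |â(n)|². -/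

import Mathlib

/-!
Group the pairs `(n₁, n₃)` by their momentum and energy `c = (n₁ + n₃, |n₁|² + |n₃|²)` and let
`T c = Σ â(n₁) â(n₃)` over the group `c`. The two resonance conditions say precisely that
`(n₁, n₃)` and `(n₂, n₄)` lie in the same group, so the quadrilinear sum is
`Σ_c T c · conj (T c) = Σ_c |T c|²`: a Parseval identity for the decomposition of the absolutely
summable family `â(n₁) â(n₃)` along the fibres of `c`, which justifies every rearrangement.
-/

open scoped BigOperators ENNReal NNReal
open Complex

noncomputable section

/-- Frequencies in `ℤ²`. -/
abbrev Z2 : Type := ℤ × ℤ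

/-- Squared Euclidean norm `|n|²` on `ℤ²`. -/
def sq2 (n : Z2) : ℤ := n.1 ^ 2 + n.2 ^ 2

/-- Euclidean dot product on `ℤ²`. -/
def dot2 (m n : Z2) : ℤ := m.1 * n.1 + m.2 * n.2

/-- The resonance factor `ω₄ = |n1|² - |n2|² + |n3|² - |n4|²`. -/
def omega4 (n1 n2 n3 n4 : Z2) : ℤ := sq2 n1 - sq2 n2 + sq2 n3 - sq2 n4

/-- Right-hand side (already multiplied by `i`, i.e. `a_n' = i·(…)`) of the FNLS system
`-i a_n' = -|a_n|² a_n + Σ_{Γ(n)} a_{n1} conj(a_{n2}) a_{n3} e^{i ω₄ t}`. -/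
def fnlsRHS (a : Z2 → ℂ) (n : Z2) (t : ℝ) : ℂ :=
  Complex.I * (-((‖a n‖ : ℂ) ^ 2) * a n +
    ∑' p : Z2 × Z2 × Z2,
      if p.1 - p.2.1 + p.2.2 = n ∧ p.1 ≠ n ∧ p.2.2 ≠ n then
        a p.1 * (starRingEnd ℂ) (a p.2.1) * a p.2.2 *
          Complex.exp (Complex.I * ((omega4 p.1 p.2.1 p.2.2 n : ℤ) : ℂ) * (t : ℂ))
      else 0)

/-- Right-hand side of the `R`-truncated system (interactions with `|ω₄| ≤ R` only). -/
def truncRHS (R : ℕ) (a : Z2 → ℂ) (n : Z2) (t : ℝ) : ℂ :=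
  Complex.I * (-((‖a n‖ : ℂ) ^ 2) * a n +
    ∑' p : Z2 × Z2 × Z2,
      if p.1 - p.2.1 + p.2.2 = n ∧ p.1 ≠ n ∧ p.2.2 ≠ n ∧
          |omega4 p.1 p.2.1 p.2.2 n| ≤ (R : ℤ) then
        a p.1 * (starRingEnd ℂ) (a p.2.1) * a p.2.2 *
          Complex.exp (Complex.I * ((omega4 p.1 p.2.1 p.2.2 n : ℤ) : ℂ) * (t : ℂ))
      else 0)

/-- Right-hand side of the resonant system RFNLS (only `ω₄ = 0` interactions, no phases). -/
def resRHS (a : Z2 → ℂ) (n : Z2) : ℂ :=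
  Complex.I * (-((‖a n‖ : ℂ) ^ 2) * a n +
    ∑' p : Z2 × Z2 × Z2,
      if p.1 - p.2.1 + p.2.2 = n ∧ p.1 ≠ n ∧ p.2.2 ≠ n ∧
          omega4 p.1 p.2.1 p.2.2 n = 0 then
        a p.1 * (starRingEnd ℂ) (a p.2.1) * a p.2.2
      else 0)

/-- `a` is a solution of the FNLS system on the set `I`: absolutely summable values,
locally bounded `ℓ¹` norm, and coordinatewise differentiable satisfying the equation. -/
def IsFNLSSolution (I : Set ℝ) (a : ℝ → Z2 → ℂ) : Prop :=
  (∀ t ∈ I, Summable fun n : Z2 => ‖a t n‖) ∧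
  (∀ t1 ∈ I, ∀ t2 ∈ I, ∃ C : ℝ, ∀ t ∈ Set.Icc t1 t2 ∩ I, (∑' n : Z2, ‖a t n‖) ≤ C) ∧
  (∀ n : Z2, ∀ t ∈ I, HasDerivWithinAt (fun τ => a τ n) (fnlsRHS (a t) n t) I t)

/-- `a` is a solution of the `R`-truncated system on `I`. -/
def IsTruncSolution (R : ℕ) (I : Set ℝ) (a : ℝ → Z2 → ℂ) : Prop :=
  (∀ t ∈ I, Summable fun n : Z2 => ‖a t n‖) ∧
  (∀ t1 ∈ I, ∀ t2 ∈ I, ∃ C : ℝ, ∀ t ∈ Set.Icc t1 t2 ∩ I, (∑' n : Z2, ‖a t n‖) ≤ C) ∧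
  (∀ n : Z2, ∀ t ∈ I, HasDerivWithinAt (fun τ => a τ n) (truncRHS R (a t) n t) I t)

/-- `a` is a solution of the resonant system RFNLS on `I`. -/
def IsRFNLSSolution (I : Set ℝ) (a : ℝ → Z2 → ℂ) : Prop :=
  (∀ t ∈ I, Summable fun n : Z2 => ‖a t n‖) ∧
  (∀ t1 ∈ I, ∀ t2 ∈ I, ∃ C : ℝ, ∀ t ∈ Set.Icc t1 t2 ∩ I, (∑' n : Z2, ‖a t n‖) ≤ C) ∧
  (∀ n : Z2, ∀ t ∈ I, HasDerivWithinAt (fun τ => a τ n) (resRHS (a t) n) I t)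

/-- The square of the `h^s` norm `Σ (1+|n|²)^s |a_n|²`, valued in `ℝ≥0∞`. -/
def hsNormSqE (s : ℝ) (a : Z2 → ℂ) : ℝ≥0∞ :=
  ∑' n : Z2, ENNReal.ofReal ((1 + (sq2 n : ℝ)) ^ s * ‖a n‖ ^ 2)

/-- The toy system with `P` modes `b_1, …, b_P`, with the convention `b_0 = b_{P+1} = 0`. -/
def IsToySolution (P : ℕ) (I : Set ℝ) (b : ℝ → ℕ → ℂ) : Prop :=
  (∀ t ∈ I, b t 0 = 0) ∧
  (∀ t ∈ I, ∀ j : ℕ, P < j → b t j = 0) ∧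
  (∀ j : ℕ, 1 ≤ j → j ≤ P → ∀ t ∈ I,
    HasDerivWithinAt (fun τ => b τ j)
      (Complex.I * (-((‖b t j‖ : ℂ) ^ 2) * b t j
        + 2 * (b t (j + 1)) ^ 2 * (starRingEnd ℂ) (b t j)
        + 2 * (b t (j - 1)) ^ 2 * (starRingEnd ℂ) (b t j))) I t)

/-- `S` satisfies the `R`-closure condition. -/
def RClosed (R : ℕ) (S : Set Z2) : Prop :=
  ∀ n1 n2 n3 : Z2, n1 ∈ S → n2 ∈ S → n3 ∈ S →
    |omega4 n1 n2 n3 (n1 - n2 + n3)| ≤ (R : ℤ) → n1 - n2 + n3 ∈ S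

/-- A rectangle in `ℤ²`: a quadruple of distinct points forming a parallelogram
(`n1 + n3 = n2 + n4`) with `ω₄ = 0`. -/
def IsRectangle (n1 n2 n3 n4 : Z2) : Prop :=
  n1 ≠ n2 ∧ n1 ≠ n3 ∧ n1 ≠ n4 ∧ n2 ≠ n3 ∧ n2 ≠ n4 ∧ n3 ≠ n4 ∧
  n1 + n3 = n2 + n4 ∧ sq2 n1 + sq2 n3 = sq2 n2 + sq2 n4

/-- Closure under completing rectangles: if three vertices of a rectangle lie in `S`,
then so does the fourth. -/
def RectClosed (S : Set Z2) : Prop :=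
  ∀ n1 n2 n3 n4 : Z2, IsRectangle n1 n2 n3 n4 → n1 ∈ S → n2 ∈ S → n3 ∈ S → n4 ∈ S

/-- A nuclear family: a rectangle with parents `n1, n3` in generation `Λ j` and
children `n2, n4` in generation `Λ (j+1)`. -/
def IsNuclearFamily (Λ : ℕ → Finset Z2) (j : ℕ) (n1 n2 n3 n4 : Z2) : Prop :=
  IsRectangle n1 n2 n3 n4 ∧ n1 ∈ Λ j ∧ n3 ∈ Λ j ∧ n2 ∈ Λ (j + 1) ∧ n4 ∈ Λ (j + 1)

/-- Existence and uniqueness (up to trivial permutations) of spouse and children. -/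
def SpouseChildren (Λ : ℕ → Finset Z2) (P : ℕ) : Prop :=
  ∀ j : ℕ, 1 ≤ j → j < P → ∀ n1 ∈ Λ j,
    ∃ n3 n2 n4 : Z2, IsNuclearFamily Λ j n1 n2 n3 n4 ∧
      ∀ n3' n2' n4' : Z2, IsNuclearFamily Λ j n1 n2' n3' n4' →
        n3' = n3 ∧ ((n2' = n2 ∧ n4' = n4) ∨ (n2' = n4 ∧ n4' = n2))

/-- Existence and uniqueness (up to trivial permutations) of sibling and parents. -/
def ParentsSibling (Λ : ℕ → Finset Z2) (P : ℕ) : Prop :=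
  ∀ j : ℕ, 1 ≤ j → j < P → ∀ n2 ∈ Λ (j + 1),
    ∃ n4 n1 n3 : Z2, IsNuclearFamily Λ j n1 n2 n3 n4 ∧
      ∀ n1' n3' n4' : Z2, IsNuclearFamily Λ j n1' n2 n3' n4' →
        n4' = n4 ∧ ((n1' = n1 ∧ n3' = n3) ∨ (n1' = n3 ∧ n3' = n1))

/-- Non-degeneracy: the sibling of a frequency is never equal to its spouse. -/
def NonDegenerate (Λ : ℕ → Finset Z2) : Prop :=
  ∀ j : ℕ, ∀ n1 n2 n3 n4 m2 m3 m4 : Z2,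
    IsNuclearFamily Λ j n1 n2 n3 n4 → IsNuclearFamily Λ (j + 1) n2 m2 m3 m4 → m3 ≠ n4

/-- The union `Λ_1 ∪ … ∪ Λ_P` of all generations. -/
def genFinset (Λ : ℕ → Finset Z2) (P : ℕ) : Finset Z2 := (Finset.Icc 1 P).biUnion Λ

/-- Faithfulness: the only rectangles in `Λ` are (permutations of) nuclear families. -/
def FaithfulGen (Λ : ℕ → Finset Z2) (P : ℕ) : Prop :=
  ∀ n1 n2 n3 n4 : Z2,
    n1 ∈ genFinset Λ P → n2 ∈ genFinset Λ P → n3 ∈ genFinset Λ P → n4 ∈ genFinset Λ P →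
    IsRectangle n1 n2 n3 n4 →
    ∃ j : ℕ, 1 ≤ j ∧ j < P ∧
      ((n1 ∈ Λ j ∧ n3 ∈ Λ j ∧ n2 ∈ Λ (j + 1) ∧ n4 ∈ Λ (j + 1)) ∨
       (n2 ∈ Λ j ∧ n4 ∈ Λ j ∧ n1 ∈ Λ (j + 1) ∧ n3 ∈ Λ (j + 1)))

/-- `S` contains at most one vertex of any rectangle having a vertex at `0`. -/
def NoRectangleWithZero (S : Set Z2) : Prop :=
  ∀ m2 m3 m4 : Z2, IsRectangle 0 m2 m3 m4 →
    ¬(m2 ∈ S ∧ m3 ∈ S) ∧ ¬(m2 ∈ S ∧ m4 ∈ S) ∧ ¬(m3 ∈ S ∧ m4 ∈ S)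

/-- `S1` and `S2` are not connected by any (nondegenerate) parallelogram of
eccentricity `≤ R`. -/
def NotConnected (R : ℕ) (S1 S2 : Set Z2) : Prop :=
  ∀ n1 n2 n3 : Z2,
    ((n1 ∈ S1 ∧ n2 ∈ S1 ∧ n3 ∈ S2) ∨ (n1 ∈ S2 ∧ n2 ∈ S2 ∧ n3 ∈ S1)) →
    (n1 ≠ n2 → n2 ≠ n3 → (R : ℤ) < |omega4 n1 n2 n3 (n1 - n2 + n3)|) ∧
    (n1 ≠ n3 → n3 ≠ n2 → (R : ℤ) < |omega4 n1 n3 n2 (n1 - n3 + n2)|)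

/-- A well-posed continuous dynamical system on a normed space `X`. -/
def IsWellPosedFlow {X : Type*} [NormedAddCommGroup X] (S : ℝ → X → X) : Prop :=
  (∀ x : X, S 0 x = x) ∧
  (∀ t1 t2 : ℝ, ∀ x : X, S (t1 + t2) x = S t1 (S t2 x)) ∧
  (∀ x : X, Continuous fun t : ℝ => S t x) ∧
  (∀ T : ℝ, 0 < T → ∀ x : X, ∀ ε : ℝ, 0 < ε → ∃ δ : ℝ, 0 < δ ∧ ∀ y : X, ‖x - y‖ ≤ δ →
     ∀ t ∈ Set.Icc (-T) T, ‖S t x - S t y‖ ≤ ε)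

/-- `sup_{t > 0} ‖S(t)x‖`, valued in `ℝ≥0∞`. -/
def supOrbitPos {X : Type*} [NormedAddCommGroup X] (S : ℝ → X → X) (x : X) : ℝ≥0∞ :=
  ⨆ t : Set.Ioi (0 : ℝ), (‖S (t : ℝ) x‖₊ : ℝ≥0∞)

/-- `sup_{t ∈ ℝ} ‖S(t)x‖`, valued in `ℝ≥0∞`. -/
def supOrbitAll {X : Type*} [NormedAddCommGroup X] (S : ℝ → X → X) (x : X) : ℝ≥0∞ :=
  ⨆ t : ℝ, (‖S t x‖₊ : ℝ≥0∞)

/-- Long-time strong instability of the flow `S` near `φ`. -/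
def LongTimeStrongInstability {X : Type*} [NormedAddCommGroup X]
    (S : ℝ → X → X) (φ : X) : Prop :=
  ∀ δ : ℝ, 0 < δ → δ < 1 → ∀ K : ℝ, 1 ≤ K →
    ∃ φs : X, ‖φ - φs‖ ≤ δ ∧ ENNReal.ofReal K ≤ supOrbitPos S φs

open ComplexConjugate

section FiberSum

variable {α β : Type*}

def fiberSum (κ : α → β) (F : α → ℂ) (c : β) : ℂ :=
  ∑' p : κ ⁻¹' {c}, F p

variable [DecidableEq β]

theorem fiberSum_eq_tsum_ite (κ : α → β) (F : α → ℂ) (c : β) :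
    fiberSum κ F c = ∑' p, if κ p = c then F p else 0 := by
  rw [fiberSum, tsum_subtype]
  exact tsum_congr fun p => by by_cases h : κ p = c <;> simp [h]

theorem summable_ite_eq_mul_conj (κ : α → β) {F : α → ℂ} (hF : Summable (‖F ·‖)) :
    Summable fun x : α × α => if κ x.1 = κ x.2 then F x.1 * conj (F x.2) else 0 := by
  refine Summable.of_norm_bounded (hF.mul_norm (f := F) (g := conj ∘ F) ?_) fun x => ?_
  · simpa only [Function.comp_apply, Complex.norm_conj] using hF
  · split_ifs <;> simp [mul_nonneg]

theorem tsum_ite_eq_mul_conj (κ : α → β) (F : α → ℂ) (p : α) :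
    ∑' q, (if κ p = κ q then F p * conj (F q) else 0) = F p * conj (fiberSum κ F (κ p)) := by
  rw [fiberSum_eq_tsum_ite, conj_tsum, ← tsum_mul_left]
  exact tsum_congr fun q => by split_ifs <;> simp_all [eq_comm]

theorem hasSum_norm_fiberSum_sq (κ : α → β) {F : α → ℂ} (hF : Summable (‖F ·‖)) :
    HasSum (fun c => ((‖fiberSum κ F c‖ ^ 2 : ℝ) : ℂ))
      (∑' x : α × α, if κ x.1 = κ x.2 then F x.1 * conj (F x.2) else 0) := by
  have hG := summable_ite_eq_mul_conj κ hF
  have hH : Summable fun p => F p * conj (fiberSum κ F (κ p)) := by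
    simpa only [tsum_ite_eq_mul_conj] using hG.prod
  rw [hG.tsum_prod]
  simp only [tsum_ite_eq_mul_conj]
  refine (hH.hasSum.tsum_fiberwise κ).congr_fun fun c => ?_
  calc ((‖fiberSum κ F c‖ ^ 2 : ℝ) : ℂ) = fiberSum κ F c * conj (fiberSum κ F c) := by
        rw [Complex.mul_conj, Complex.normSq_eq_norm_sq]
    _ = ∑' p : κ ⁻¹' {c}, F p * conj (fiberSum κ F c) := tsum_mul_right.symm
    _ = ∑' p : κ ⁻¹' {c}, F p * conj (fiberSum κ F (κ p)) :=
        tsum_congr fun p => by rw [show κ p = c from p.2]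

end FiberSum

theorem sub_add_sub_eq_zero_iff_add_eq_add {G : Type*} [AddCommGroup G] (x y z w : G) :
    x - y + z - w = 0 ↔ x + z = y + w := by
  rw [sub_eq_zero, sub_add_eq_add_sub, sub_eq_iff_eq_add, add_comm y w]

def momentumEnergy (p : Z2 × Z2) : Z2 × ℤ := (p.1 + p.2, sq2 p.1 + sq2 p.2)

theorem resonant_sum_eq_tsum_pairs (a : Z2 → ℂ) :
    (∑' q : Z2 × Z2 × Z2 × Z2,
        if q.1 - q.2.1 + q.2.2.1 - q.2.2.2 = 0 ∧
            sq2 q.1 - sq2 q.2.1 + sq2 q.2.2.1 - sq2 q.2.2.2 = 0 then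
          a q.1 * conj (a q.2.1) * a q.2.2.1 * conj (a q.2.2.2)
        else 0) =
      ∑' x : (Z2 × Z2) × (Z2 × Z2), if momentumEnergy x.1 = momentumEnergy x.2 then
        a x.1.1 * a x.1.2 * conj (a x.2.1 * a x.2.2) else 0 := by
  let e : Z2 × Z2 × Z2 × Z2 ≃ (Z2 × Z2) × (Z2 × Z2) :=
    ⟨fun q => ((q.1, q.2.2.1), (q.2.1, q.2.2.2)), fun x => (x.1.1, x.2.1, x.1.2, x.2.2),
      fun _ => rfl, fun _ => rfl⟩
  rw [← e.tsum_eq]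
  refine tsum_congr fun q => if_congr ?_ (by simp [e]; ring) rfl
  simp only [e, Equiv.coe_fn_mk, momentumEnergy, Prod.mk.injEq]
  exact and_congr (sub_add_sub_eq_zero_iff_add_eq_add ..) (sub_add_sub_eq_zero_iff_add_eq_add ..)

theorem tsum_ite_momentumEnergy_eq_fiberSum (a : Z2 → ℂ) (n : Z2) (k : ℤ) :
    (∑' p : Z2 × Z2, if p.1 + p.2 = n ∧ sq2 p.1 + sq2 p.2 = k then a p.1 * a p.2 else 0) =
      fiberSum momentumEnergy (fun p => a p.1 * a p.2) (n, k) := by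
  rw [fiberSum_eq_tsum_ite]
  simp only [momentumEnergy, Prod.mk.injEq]

/-- For absolutely summable `â : ℤ² → ℂ`, the resonant quadrilinear
sum equals `Σ_{n,k} |Σ_{n1+n3=n, |n1|²+|n3|²=k} â(n1)â(n3)|²`; in particular it is a
nonnegative real number, and the Hamiltonian `H₀` of the resonant system dominates
`Σ |n|²|â(n)|²`. -/
theorem resonant_hamiltonian_positive
    (a : Z2 → ℂ) (ha : Summable fun n : Z2 => ‖a n‖) :
    (∑' q : Z2 × Z2 × Z2 × Z2,
        if q.1 - q.2.1 + q.2.2.1 - q.2.2.2 = 0 ∧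
            sq2 q.1 - sq2 q.2.1 + sq2 q.2.2.1 - sq2 q.2.2.2 = 0 then
          a q.1 * (starRingEnd ℂ) (a q.2.1) * a q.2.2.1 * (starRingEnd ℂ) (a q.2.2.2)
        else 0) =
      ((∑' n : Z2, ∑' k : ℤ,
          ‖∑' p : Z2 × Z2, if p.1 + p.2 = n ∧ sq2 p.1 + sq2 p.2 = k then
            a p.1 * a p.2 else 0‖ ^ 2 : ℝ) : ℂ) ∧
    (0 : ℝ) ≤ (∑' n : Z2, ∑' k : ℤ,
        ‖∑' p : Z2 × Z2, if p.1 + p.2 = n ∧ sq2 p.1 + sq2 p.2 = k then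
          a p.1 * a p.2 else 0‖ ^ 2) ∧
    (∑' n : Z2, (sq2 n : ℝ) * ‖a n‖ ^ 2) ≤
      (∑' n : Z2, (sq2 n : ℝ) * ‖a n‖ ^ 2) +
        (1 / 2) * (∑' n : Z2, ∑' k : ℤ,
          ‖∑' p : Z2 × Z2, if p.1 + p.2 = n ∧ sq2 p.1 + sq2 p.2 = k then
            a p.1 * a p.2 else 0‖ ^ 2) := by
  have hParseval := hasSum_norm_fiberSum_sq momentumEnergy (ha.mul_norm ha)
  have hsq : (∑' n : Z2, ∑' k : ℤ,
      ‖∑' p : Z2 × Z2, if p.1 + p.2 = n ∧ sq2 p.1 + sq2 p.2 = k then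
        a p.1 * a p.2 else 0‖ ^ 2) =
      ∑' c, ‖fiberSum momentumEnergy (fun p => a p.1 * a p.2) c‖ ^ 2 := by
    simp only [tsum_ite_momentumEnergy_eq_fiberSum]
    exact (Complex.summable_ofReal.mp hParseval.summable).tsum_prod.symm
  have hnonneg : (0 : ℝ) ≤ ∑' n : Z2, ∑' k : ℤ,
      ‖∑' p : Z2 × Z2, if p.1 + p.2 = n ∧ sq2 p.1 + sq2 p.2 = k then
        a p.1 * a p.2 else 0‖ ^ 2 :=
    tsum_nonneg fun _ => tsum_nonneg fun _ => sq_nonneg _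
  refine ⟨?_, hnonneg, le_add_of_nonneg_right (mul_nonneg (by norm_num) hnonneg)⟩
  rw [resonant_sum_eq_tsum_pairs, ← hParseval.tsum_eq, hsq, Complex.ofReal_tsum]
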